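/- Let Γ be a weighted zero-sum population network game with weights (ω_i)_{i∈V} and β > 0, let L(μ) = Σ_{i∈V} ω_i·[π_i(BR_i(μ), μ) − π_i(μ_i, μ)], and let μ : [0,∞) → Δ be a solution of the homogeneous belief dynamics μ'(τ) = BR(μ(τ)) − μ(τ) remaining in the interior of Δ. Then for every τ ≥ 0, writing x_i = BR_i(μ(τ)), the derivative satisfies d/dτ L(μ(τ)) = −(1/β)·Σ_{i∈V} ω_i Σ_{s∈S_i} (ln x_i(s) − ln μ_i(τ)(s))·(x_i(s) − μ_i(τ)(s)) ≤ 0, with equality if and only if BR_i(μ(τ)) = μ_i(τ) for all i ∈ V; in particular τ ↦ L(μ(τ)) is nonincreasing. -/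

import Mathlib

open Real Filter

/-- Membership in the standard probability simplex on a finite set `S`. -/
def inSimplex {S : Type*} [Fintype S] (x : S → ℝ) : Prop :=
  (∀ s, 0 ≤ x s) ∧ ∑ s, x s = 1

/-- Membership in the product of simplices `Δ = ∏ i, Δ_i`. -/
def inProd {V : Type*} [Fintype V] {S : V → Type*} [∀ i, Fintype (S i)]
    (μ : ∀ i, S i → ℝ) : Prop :=
  ∀ i, inSimplex (μ i)

/-- Payoff to population `i` of pure strategy `s` given beliefs `μ`. -/
def payoffTo {V : Type*} [Fintype V] {S : V → Type*} [∀ i, Fintype (S i)]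
    (E : V → V → Prop) [DecidableRel E] (A : ∀ i j, S i → S j → ℝ)
    (μ : ∀ i, S i → ℝ) (i : V) (s : S i) : ℝ :=
  ∑ j, if E i j then ∑ s' : S j, A i j s s' * μ j s' else 0

/-- Logit best response of population `i` to beliefs `μ`, rationality `β`. -/
noncomputable def BR {V : Type*} [Fintype V] {S : V → Type*} [∀ i, Fintype (S i)]
    (E : V → V → Prop) [DecidableRel E] (A : ∀ i j, S i → S j → ℝ) (β : ℝ)
    (μ : ∀ i, S i → ℝ) (i : V) (s : S i) : ℝ :=
  Real.exp (β * payoffTo E A μ i s) / ∑ s' : S i, Real.exp (β * payoffTo E A μ i s')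

/-- Quantal response equilibrium. -/
def isQRE {V : Type*} [Fintype V] {S : V → Type*} [∀ i, Fintype (S i)]
    (E : V → V → Prop) [DecidableRel E] (A : ∀ i j, S i → S j → ℝ) (β : ℝ)
    (x : ∀ i, S i → ℝ) : Prop :=
  inProd x ∧ ∀ i, x i = BR E A β x i

/-- The bilinear form `x_iᵀ A_{ij} y_j`. -/
def bilin {V : Type*} {S : V → Type*} [∀ i, Fintype (S i)]
    (A : ∀ i j, S i → S j → ℝ) (x y : ∀ i, S i → ℝ) (i j : V) : ℝ :=
  ∑ s : S i, ∑ s' : S j, x i s * A i j s s' * y j s'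

/-- The game is weighted zero-sum with weights `ω`. -/
def weightedZeroSum {V : Type*} [Fintype V] {S : V → Type*} [∀ i, Fintype (S i)]
    (E : V → V → Prop) [DecidableRel E] (A : ∀ i j, S i → S j → ℝ)
    (ω : V → ℝ) : Prop :=
  ∀ x, inProd x → ∑ i, ω i * ∑ j, (if E i j then bilin A x x i j else 0) = 0

/-- Entropy perturbation `v_β(x) = -(1/β) Σ_s x s · ln (x s)` (`Real.log 0 = 0`). -/
noncomputable def vEnt {S : Type*} [Fintype S] (β : ℝ) (x : S → ℝ) : ℝ :=
  -(1 / β) * ∑ s, x s * Real.log (x s)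

/-- Perturbed payoff `π_i(x_i, μ)`. -/
noncomputable def pPay {V : Type*} [Fintype V] {S : V → Type*} [∀ i, Fintype (S i)]
    (E : V → V → Prop) [DecidableRel E] (A : ∀ i j, S i → S j → ℝ) (β : ℝ)
    (μ : ∀ i, S i → ℝ) (i : V) (xi : S i → ℝ) : ℝ :=
  (∑ j, if E i j then ∑ s : S i, ∑ s' : S j, xi s * A i j s s' * μ j s' else 0)
    + vEnt β xi

/-- Second partial derivative of `μ ↦ BR_i(μ)(s)` (on the ambient space) in the
coordinate `(j, s')`, evaluated at `μ`. -/
noncomputable def secondPartialBR {V : Type*} [Fintype V] [DecidableEq V]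
    {S : V → Type*} [∀ i, Fintype (S i)] [∀ i, DecidableEq (S i)]
    (E : V → V → Prop) [DecidableRel E] (A : ∀ i j, S i → S j → ℝ) (β : ℝ)
    (μ : ∀ i, S i → ℝ) (i : V) (s : S i) (j : V) (s' : S j) : ℝ :=
  iteratedDeriv 2 (fun r : ℝ =>
    BR E A β (fun k => μ k + r • Pi.single (M := fun k => S k → ℝ) j (Pi.single s' (1 : ℝ)) k) i s) 0

/-- The `(i,s)`-component of the time-reparameterized mean-belief vector field of an
initially heterogeneous system with initial belief variances `σ2`. -/
noncomputable def heteroField {V : Type*} [Fintype V] [DecidableEq V]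
    {S : V → Type*} [∀ i, Fintype (S i)] [∀ i, DecidableEq (S i)]
    (E : V → V → Prop) [DecidableRel E] (A : ∀ i j, S i → S j → ℝ) (β : ℝ)
    (σ2 : ∀ j, S j → ℝ) (τ : ℝ) (μ : ∀ i, S i → ℝ) (i : V) (s : S i) : ℝ :=
  BR E A β μ i s - μ i s + (1 / 2) * Real.exp (-2 * τ) *
    ∑ j, if E i j then
      ∑ s' : S j, σ2 j s' * secondPartialBR E A β μ i s j s' else 0


/-!
Along any curve `μ` with `Σ_s μ'_i(s) = 0`, the gap `π_i(BR_i(μ), μ) − π_i(μ_i, μ)` moves at rate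
`(BR_i − μ_i)ᵀ u_i(μ') − (1/β) ⟨ln BR_i − ln μ_i, μ'_i⟩`: since `π_i(BR_i(μ), μ) = (1/β) ln Σ_s e^{β u_{i,s}(μ)}`,
the derivative of the logit response never appears. For `μ' = BR(μ) − μ` the first terms sum, with
weights `ω_i`, to the total payoff form at `BR(μ) − μ`; it vanishes on `Δ` by the zero-sum hypothesis,
hence by polarization on `Δ − Δ`. What is left is `−1/β` times the weighted Jeffreys divergence between
`BR(μ)` and `μ`, which is nonnegative and vanishes exactly when they coincide.
-/

open Finset

section Divergence

variable {S : Type*} [Fintype S]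

theorem log_sub_log_mul_sub_pos {a b : ℝ} (ha : 0 < a) (hb : 0 < b) (hab : a ≠ b) :
    0 < (Real.log a - Real.log b) * (a - b) := by
  rcases hab.lt_or_gt with h | h
  · exact mul_pos_of_neg_of_neg (sub_neg.2 (Real.log_lt_log ha h)) (sub_neg.2 h)
  · exact mul_pos (sub_pos.2 (Real.log_lt_log hb h)) (sub_pos.2 h)

theorem log_sub_log_mul_sub_nonneg {a b : ℝ} (ha : 0 < a) (hb : 0 < b) :
    0 ≤ (Real.log a - Real.log b) * (a - b) := by
  rcases eq_or_ne a b with rfl | hab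
  · simp
  · exact (log_sub_log_mul_sub_pos ha hb hab).le

theorem log_sub_log_mul_sub_eq_zero_iff {a b : ℝ} (ha : 0 < a) (hb : 0 < b) :
    (Real.log a - Real.log b) * (a - b) = 0 ↔ a = b :=
  ⟨fun h => by_contra fun hab => (log_sub_log_mul_sub_pos ha hb hab).ne' h,
    fun h => by simp [h]⟩

/-- The symmetrised Kullback–Leibler divergence `KL(x‖y) + KL(y‖x)`. -/
noncomputable def jeffreysDiv (x y : S → ℝ) : ℝ :=
  ∑ s, (Real.log (x s) - Real.log (y s)) * (x s - y s)

theorem jeffreysDiv_nonneg {x y : S → ℝ} (hx : ∀ s, 0 < x s) (hy : ∀ s, 0 < y s) :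
    0 ≤ jeffreysDiv x y :=
  sum_nonneg fun s _ => log_sub_log_mul_sub_nonneg (hx s) (hy s)

theorem jeffreysDiv_eq_zero_iff {x y : S → ℝ} (hx : ∀ s, 0 < x s) (hy : ∀ s, 0 < y s) :
    jeffreysDiv x y = 0 ↔ x = y := by
  rw [jeffreysDiv, sum_eq_zero_iff_of_nonneg fun s _ => log_sub_log_mul_sub_nonneg (hx s) (hy s),
    funext_iff]
  simp only [mem_univ, true_implies, log_sub_log_mul_sub_eq_zero_iff (hx _) (hy _)]

end Divergence

section WeightedDivergence

variable {V : Type*} [Fintype V] {S : V → Type*} [∀ i, Fintype (S i)]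
  {ω : V → ℝ} {x y : ∀ i, S i → ℝ}

theorem sum_mul_jeffreysDiv_nonneg (hω : ∀ i, 0 < ω i) (hx : ∀ i s, 0 < x i s)
    (hy : ∀ i s, 0 < y i s) : 0 ≤ ∑ i, ω i * jeffreysDiv (x i) (y i) :=
  sum_nonneg fun i _ => mul_nonneg (hω i).le (jeffreysDiv_nonneg (hx i) (hy i))

theorem sum_mul_jeffreysDiv_eq_zero_iff (hω : ∀ i, 0 < ω i) (hx : ∀ i s, 0 < x i s)
    (hy : ∀ i s, 0 < y i s) : ∑ i, ω i * jeffreysDiv (x i) (y i) = 0 ↔ ∀ i, x i = y i := by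
  rw [sum_eq_zero_iff_of_nonneg fun i _ =>
    mul_nonneg (hω i).le (jeffreysDiv_nonneg (hx i) (hy i))]
  simp only [mem_univ, true_implies, mul_eq_zero, (hω _).ne', false_or,
    jeffreysDiv_eq_zero_iff (hx _) (hy _)]

end WeightedDivergence

section Calculus

variable {S : Type*} [Fintype S] {x : ℝ → S → ℝ} {x' : S → ℝ} {τ : ℝ}

theorem hasDerivAt_vEnt (β : ℝ) (hx : HasDerivAt x x' τ) (hpos : ∀ s, 0 < x τ s) :
    HasDerivAt (fun t => vEnt β (x t))
      (-(1 / β) * ∑ s, x' s * (Real.log (x τ s) + 1)) τ := by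
  refine HasDerivAt.const_mul _ (HasDerivAt.fun_sum fun s _ => ?_)
  rw [mul_comm]
  exact (Real.hasDerivAt_mul_log (hpos s).ne').comp τ (hasDerivAt_pi.1 hx s)

theorem hasDerivAt_log_sum_exp [Nonempty S] (hx : HasDerivAt x x' τ) :
    HasDerivAt (fun t => Real.log (∑ s, Real.exp (x t s)))
      (∑ s, Real.exp (x τ s) / (∑ s', Real.exp (x τ s')) * x' s) τ := by
  have hsum : HasDerivAt (fun t => ∑ s, Real.exp (x t s)) (∑ s, Real.exp (x τ s) * x' s) τ :=
    HasDerivAt.fun_sum fun s _ => (hasDerivAt_pi.1 hx s).exp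
  convert hsum.log (sum_pos (fun s _ => Real.exp_pos (x τ s)) univ_nonempty).ne' using 1
  rw [sum_div]
  exact sum_congr rfl fun s _ => div_mul_eq_mul_div _ _ _

end Calculus

section Game

variable {V : Type*} [Fintype V] {S : V → Type*} [∀ i, Fintype (S i)]
  (E : V → V → Prop) [DecidableRel E] (A : ∀ i j, S i → S j → ℝ)

theorem sum_mul_payoffTo (μ : ∀ i, S i → ℝ) (i : V) (x : S i → ℝ) :
    ∑ s, x s * payoffTo E A μ i s
      = ∑ j, if E i j then ∑ s, ∑ s', x s * A i j s s' * μ j s' else 0 := by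
  simp only [payoffTo, mul_sum]
  rw [sum_comm]
  refine sum_congr rfl fun j _ => ?_
  split_ifs <;> simp [mul_sum, mul_assoc]

theorem hasDerivAt_payoffTo {μ : ℝ → ∀ i, S i → ℝ} {μ' : ∀ i, S i → ℝ} {τ : ℝ}
    (hμ : HasDerivAt μ μ' τ) (i : V) (s : S i) :
    HasDerivAt (fun t => payoffTo E A (μ t) i s) (payoffTo E A μ' i s) τ := by
  refine HasDerivAt.fun_sum fun j _ => ?_
  split_ifs
  · exact HasDerivAt.fun_sum fun s' _ =>
      (hasDerivAt_pi.1 (hasDerivAt_pi.1 hμ j) s').const_mul _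
  · exact hasDerivAt_const _ _

theorem pPay_eq (β : ℝ) (μ : ∀ i, S i → ℝ) (i : V) (x : S i → ℝ) :
    pPay E A β μ i x = ∑ s, x s * payoffTo E A μ i s + vEnt β x := by
  rw [pPay, sum_mul_payoffTo]

end Game

section LogitResponse

variable {V : Type*} [Fintype V] {S : V → Type*} [∀ i, Fintype (S i)]
  (E : V → V → Prop) [DecidableRel E] (A : ∀ i j, S i → S j → ℝ) (β : ℝ)
  (μ : ∀ i, S i → ℝ) (i : V) [Nonempty (S i)]

theorem sum_exp_payoffTo_pos : 0 < ∑ s, Real.exp (β * payoffTo E A μ i s) :=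
  sum_pos (fun _ _ => Real.exp_pos _) univ_nonempty

theorem BR_pos (s : S i) : 0 < BR E A β μ i s :=
  div_pos (Real.exp_pos _) (sum_exp_payoffTo_pos E A β μ i)

theorem sum_BR : ∑ s, BR E A β μ i s = 1 := by
  unfold BR
  rw [← sum_div, div_self (sum_exp_payoffTo_pos E A β μ i).ne']

theorem log_BR (s : S i) :
    Real.log (BR E A β μ i s)
      = β * payoffTo E A μ i s - Real.log (∑ s', Real.exp (β * payoffTo E A μ i s')) := by
  rw [BR, Real.log_div (Real.exp_pos _).ne' (sum_exp_payoffTo_pos E A β μ i).ne', Real.log_exp]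

theorem sum_log_BR_mul {v : S i → ℝ} (hv : ∑ s, v s = 0) :
    ∑ s, Real.log (BR E A β μ i s) * v s = β * ∑ s, v s * payoffTo E A μ i s := by
  simp only [log_BR, sub_mul, sum_sub_distrib, ← mul_sum, hv, mul_zero, sub_zero]
  rw [mul_sum]
  exact sum_congr rfl fun s _ => by ring

theorem pPay_BR (hβ : β ≠ 0) :
    pPay E A β μ i (BR E A β μ i)
      = 1 / β * Real.log (∑ s, Real.exp (β * payoffTo E A μ i s)) := by
  have hlog : ∑ s, BR E A β μ i s * Real.log (BR E A β μ i s)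
      = β * ∑ s, BR E A β μ i s * payoffTo E A μ i s
        - Real.log (∑ s, Real.exp (β * payoffTo E A μ i s)) := by
    simp only [log_BR, mul_sub, sum_sub_distrib, ← sum_mul, sum_BR, one_mul, mul_left_comm _ β,
      ← mul_sum]
  rw [pPay_eq, vEnt, hlog]
  field_simp
  ring

end LogitResponse

section Gap

variable {V : Type*} [Fintype V] {S : V → Type*} [∀ i, Fintype (S i)]
  (E : V → V → Prop) [DecidableRel E] (A : ∀ i j, S i → S j → ℝ) {β : ℝ}

theorem hasDerivAt_pPay_BR_sub_pPay (hβ : β ≠ 0) {μ : ℝ → ∀ i, S i → ℝ}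
    {μ' : ∀ i, S i → ℝ} {τ : ℝ} (hμ : HasDerivAt μ μ' τ) (i : V) [Nonempty (S i)]
    (hpos : ∀ s, 0 < μ τ i s) (hμ' : ∑ s, μ' i s = 0) :
    HasDerivAt (fun t => pPay E A β (μ t) i (BR E A β (μ t) i) - pPay E A β (μ t) i (μ t i))
      (∑ s, (BR E A β (μ τ) i s - μ τ i s) * payoffTo E A μ' i s
        - 1 / β * ∑ s, (Real.log (BR E A β (μ τ) i s) - Real.log (μ τ i s)) * μ' i s) τ := by
  have hμi : HasDerivAt (fun t => μ t i) (μ' i) τ := hasDerivAt_pi.1 hμ i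
  have hlogZ := ((hasDerivAt_log_sum_exp (hasDerivAt_pi.2 fun s =>
    (hasDerivAt_payoffTo E A hμ i s).const_mul β)).const_mul (1 / β))
  have hpair : HasDerivAt (fun t => ∑ s, μ t i s * payoffTo E A (μ t) i s)
      (∑ s, (μ' i s * payoffTo E A (μ τ) i s + μ τ i s * payoffTo E A μ' i s)) τ :=
    HasDerivAt.fun_sum fun s _ => (hasDerivAt_pi.1 hμi s).mul (hasDerivAt_payoffTo E A hμ i s)
  have hL : (fun t => pPay E A β (μ t) i (BR E A β (μ t) i) - pPay E A β (μ t) i (μ t i))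
      = fun t => 1 / β * Real.log (∑ s, Real.exp (β * payoffTo E A (μ t) i s))
        - (∑ s, μ t i s * payoffTo E A (μ t) i s + vEnt β (μ t i)) :=
    funext fun t => by rw [pPay_BR E A β (μ t) i hβ, pPay_eq]
  have hsoftmax : 1 / β * ∑ s, Real.exp (β * payoffTo E A (μ τ) i s)
        / (∑ s', Real.exp (β * payoffTo E A (μ τ) i s')) * (β * payoffTo E A μ' i s)
      = ∑ s, BR E A β (μ τ) i s * payoffTo E A μ' i s := by
    rw [mul_sum]
    exact sum_congr rfl fun s _ => by unfold BR; field_simp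
  have hent : ∑ s, μ' i s * (Real.log (μ τ i s) + 1) = ∑ s, Real.log (μ τ i s) * μ' i s := by
    simp only [mul_add, mul_one, sum_add_distrib, hμ', add_zero, mul_comm]
  rw [hL]
  refine (hlogZ.fun_sub (hpair.fun_add (hasDerivAt_vEnt β hμi hpos))).congr_deriv ?_
  rw [hsoftmax, hent]
  simp only [sub_mul, sum_sub_distrib, sum_add_distrib, sum_log_BR_mul E A β (μ τ) i hμ']
  field_simp
  ring

end Gap

section ZeroSum

variable {V : Type*} [Fintype V] {S : V → Type*} [∀ i, Fintype (S i)]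
  (E : V → V → Prop) [DecidableRel E] (A : ∀ i j, S i → S j → ℝ) (ω : V → ℝ)

/-- `weightedZeroSum E A ω` says precisely that this form vanishes on `Δ`. -/
def payoffForm (x : ∀ i, S i → ℝ) : ℝ :=
  ∑ i, ω i * ∑ j, if E i j then bilin A x x i j else 0

theorem payoffForm_eq_sum_mul_payoffTo (x : ∀ i, S i → ℝ) :
    payoffForm E A ω x = ∑ i, ω i * ∑ s, x i s * payoffTo E A x i s := by
  simp only [payoffForm, sum_mul_payoffTo, bilin]

omit [Fintype V] in
theorem bilin_sub_add_four_mul_bilin_midpoint (x y : ∀ i, S i → ℝ) (i j : V) :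
    bilin A (x - y) (x - y) i j + 4 * bilin A ((1 / 2 : ℝ) • (x + y)) ((1 / 2 : ℝ) • (x + y)) i j
      = 2 * bilin A x x i j + 2 * bilin A y y i j := by
  simp only [bilin, mul_sum, ← sum_add_distrib]
  exact sum_congr rfl fun s _ => sum_congr rfl fun s' _ => by
    simp only [Pi.sub_apply, Pi.smul_apply, Pi.add_apply, smul_eq_mul]
    ring

theorem payoffForm_sub_add_four_mul_payoffForm_midpoint (x y : ∀ i, S i → ℝ) :
    payoffForm E A ω (x - y) + 4 * payoffForm E A ω ((1 / 2 : ℝ) • (x + y))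
      = 2 * payoffForm E A ω x + 2 * payoffForm E A ω y := by
  simp only [payoffForm, mul_sum, ← sum_add_distrib]
  refine sum_congr rfl fun i _ => sum_congr rfl fun j _ => ?_
  split_ifs
  · linear_combination ω i * bilin_sub_add_four_mul_bilin_midpoint A x y i j
  · ring

theorem inProd_midpoint {x y : ∀ i, S i → ℝ} (hx : inProd x) (hy : inProd y) :
    inProd ((1 / 2 : ℝ) • (x + y)) := fun i =>
  ⟨fun s => by
    simp only [Pi.smul_apply, Pi.add_apply, smul_eq_mul]
    linarith [(hx i).1 s, (hy i).1 s],
   by simp only [Pi.smul_apply, Pi.add_apply, smul_eq_mul, ← mul_sum, sum_add_distrib, (hx i).2,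
      (hy i).2]; norm_num⟩

variable {E A ω} in
/-- Polarization: a quadratic form vanishing on the convex set `Δ` vanishes on `Δ - Δ`. -/
theorem weightedZeroSum.payoffForm_sub_eq_zero (hzs : weightedZeroSum E A ω)
    {x y : ∀ i, S i → ℝ} (hx : inProd x) (hy : inProd y) : payoffForm E A ω (x - y) = 0 := by
  have hx0 : payoffForm E A ω x = 0 := hzs x hx
  have hy0 : payoffForm E A ω y = 0 := hzs y hy
  have hmid0 : payoffForm E A ω ((1 / 2 : ℝ) • (x + y)) = 0 := hzs _ (inProd_midpoint hx hy)
  linarith [payoffForm_sub_add_four_mul_payoffForm_midpoint E A ω x y]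

end ZeroSum

section Lyapunov

variable {V : Type*} [Fintype V] {S : V → Type*} [∀ i, Fintype (S i)] [∀ i, Nonempty (S i)]
  (E : V → V → Prop) [DecidableRel E] (A : ∀ i j, S i → S j → ℝ) (β : ℝ) (ω : V → ℝ)

noncomputable def lyapunov (μ : ∀ i, S i → ℝ) : ℝ :=
  ∑ i, ω i * (pPay E A β μ i (BR E A β μ i) - pPay E A β μ i (μ i))

theorem hasDerivAt_lyapunov (hβ : β ≠ 0) (hzs : weightedZeroSum E A ω)
    {μ : ℝ → ∀ i, S i → ℝ} {τ : ℝ} (hμ : HasDerivAt μ (BR E A β (μ τ) - μ τ) τ)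
    (hΔ : inProd (μ τ)) (hpos : ∀ i s, 0 < μ τ i s) :
    HasDerivAt (fun t => lyapunov E A β ω (μ t))
      (-(1 / β) * ∑ i, ω i * jeffreysDiv (BR E A β (μ τ) i) (μ τ i)) τ := by
  have hBR : inProd (BR E A β (μ τ)) := fun i =>
    ⟨fun s => (BR_pos E A β (μ τ) i s).le, sum_BR E A β (μ τ) i⟩
  have hgap := fun i => hasDerivAt_pPay_BR_sub_pPay E A hβ hμ i (hpos i)
    (by simp only [Pi.sub_apply, sum_sub_distrib, sum_BR, (hΔ i).2, sub_self])
  have hsum := HasDerivAt.fun_sum (u := univ) fun i _ => (hgap i).const_mul (ω i)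
  unfold lyapunov
  refine hsum.congr_deriv ?_
  have hzero := hzs.payoffForm_sub_eq_zero hBR hΔ
  rw [payoffForm_eq_sum_mul_payoffTo] at hzero
  calc _ = ∑ i, ω i * ∑ s, (BR E A β (μ τ) - μ τ) i s * payoffTo E A (BR E A β (μ τ) - μ τ) i s
        - 1 / β * ∑ i, ω i * jeffreysDiv (BR E A β (μ τ) i) (μ τ i) := by
        rw [mul_sum, ← sum_sub_distrib]
        exact sum_congr rfl fun i _ => by simp only [jeffreysDiv, Pi.sub_apply]; ring
    _ = _ := by rw [hzero]; ring

end Lyapunov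

theorem lyapunov_derivative_nonpos_of_weightedZeroSum_general
    {V : Type*} [Fintype V]
    {S : V → Type*} [∀ i, Fintype (S i)] [∀ i, Nonempty (S i)]
    (E : V → V → Prop) [DecidableRel E]
    (A : ∀ i j, S i → S j → ℝ)
    (ω : V → ℝ) (hω : ∀ i, 0 < ω i) (hzs : weightedZeroSum E A ω)
    (β : ℝ) (hβ : 0 < β)
    (μ : ℝ → ∀ i, S i → ℝ)
    (hμΔ : ∀ τ ≥ (0 : ℝ), inProd (μ τ) ∧ ∀ i s, 0 < μ τ i s)
    (hode : ∀ τ ≥ (0 : ℝ),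
      HasDerivAt μ (fun i s => BR E A β (μ τ) i s - μ τ i s) τ) :
    (∀ τ ≥ (0 : ℝ),
      HasDerivAt
        (fun t => ∑ i, ω i *
          (pPay E A β (μ t) i (BR E A β (μ t) i) - pPay E A β (μ t) i (μ t i)))
        (-(1 / β) * ∑ i, ω i * ∑ s,
          (Real.log (BR E A β (μ τ) i s) - Real.log (μ τ i s)) *
            (BR E A β (μ τ) i s - μ τ i s)) τ ∧
      (-(1 / β) * ∑ i, ω i * ∑ s,
          (Real.log (BR E A β (μ τ) i s) - Real.log (μ τ i s)) *
            (BR E A β (μ τ) i s - μ τ i s)) ≤ 0 ∧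
      ((-(1 / β) * ∑ i, ω i * ∑ s,
          (Real.log (BR E A β (μ τ) i s) - Real.log (μ τ i s)) *
            (BR E A β (μ τ) i s - μ τ i s)) = 0 ↔
        ∀ i, BR E A β (μ τ) i = μ τ i)) ∧
    AntitoneOn
      (fun t => ∑ i, ω i *
        (pPay E A β (μ t) i (BR E A β (μ t) i) - pPay E A β (μ t) i (μ t i)))
      (Set.Ici (0 : ℝ)) := by
  have hderiv : ∀ τ ≥ (0 : ℝ), HasDerivAt (fun t => lyapunov E A β ω (μ t))
      (-(1 / β) * ∑ i, ω i * jeffreysDiv (BR E A β (μ τ) i) (μ τ i)) τ := fun τ hτ =>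
    hasDerivAt_lyapunov E A β ω hβ.ne' hzs (hode τ hτ) (hμΔ τ hτ).1 (hμΔ τ hτ).2
  have hdiv : ∀ τ ≥ (0 : ℝ), 0 ≤ ∑ i, ω i * jeffreysDiv (BR E A β (μ τ) i) (μ τ i) :=
    fun τ hτ => sum_mul_jeffreysDiv_nonneg hω (fun i => BR_pos E A β (μ τ) i) (hμΔ τ hτ).2
  have hnonpos : ∀ τ ≥ (0 : ℝ),
      -(1 / β) * ∑ i, ω i * jeffreysDiv (BR E A β (μ τ) i) (μ τ i) ≤ 0 := fun τ hτ =>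
    mul_nonpos_of_nonpos_of_nonneg (by simp [hβ.le]) (hdiv τ hτ)
  refine ⟨fun τ hτ => ⟨hderiv τ hτ, hnonpos τ hτ, ?_⟩, ?_⟩
  · rw [mul_eq_zero, or_iff_right (by simp [hβ.ne'])]
    exact sum_mul_jeffreysDiv_eq_zero_iff hω (fun i => BR_pos E A β (μ τ) i) (hμΔ τ hτ).2
  · refine antitoneOn_of_hasDerivWithinAt_nonpos (convex_Ici 0)
      (fun t ht => (hderiv t ht).continuousAt.continuousWithinAt) (fun t ht => ?_)
      (fun t ht => hnonpos t (interior_subset ht))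
    exact (hderiv t (interior_subset ht)).hasDerivWithinAt

/-- along interior solutions of the homogeneous belief dynamics in a
weighted zero-sum game, the Lyapunov function `L` has derivative
`-(1/β) Σ_i ω_i Σ_s (ln x_i(s) - ln μ_i(s))·(x_i(s) - μ_i(s)) ≤ 0` (with
`x = BR(μ(τ))`), vanishing exactly at QRE points; in particular `L∘μ` is
nonincreasing. -/
theorem lyapunov_derivative_nonpos_of_weightedZeroSum
    {V : Type*} [Fintype V] [Nonempty V] [DecidableEq V]
    {S : V → Type*} [∀ i, Fintype (S i)] [∀ i, Nonempty (S i)] [∀ i, DecidableEq (S i)]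
    (E : V → V → Prop) [DecidableRel E]
    (hE_symm : ∀ i j, E i j → E j i) (hE_irrefl : ∀ i, ¬ E i i)
    (A : ∀ i j, S i → S j → ℝ)
    (ω : V → ℝ) (hω : ∀ i, 0 < ω i) (hzs : weightedZeroSum E A ω)
    (β : ℝ) (hβ : 0 < β)
    (μ : ℝ → ∀ i, S i → ℝ)
    (hμΔ : ∀ τ ≥ (0 : ℝ), inProd (μ τ) ∧ ∀ i s, 0 < μ τ i s)
    (hode : ∀ τ ≥ (0 : ℝ),
      HasDerivAt μ (fun i s => BR E A β (μ τ) i s - μ τ i s) τ) :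
    (∀ τ ≥ (0 : ℝ),
      HasDerivAt
        (fun t => ∑ i, ω i *
          (pPay E A β (μ t) i (BR E A β (μ t) i) - pPay E A β (μ t) i (μ t i)))
        (-(1 / β) * ∑ i, ω i * ∑ s,
          (Real.log (BR E A β (μ τ) i s) - Real.log (μ τ i s)) *
            (BR E A β (μ τ) i s - μ τ i s)) τ ∧
      (-(1 / β) * ∑ i, ω i * ∑ s,
          (Real.log (BR E A β (μ τ) i s) - Real.log (μ τ i s)) *
            (BR E A β (μ τ) i s - μ τ i s)) ≤ 0 ∧
      ((-(1 / β) * ∑ i, ω i * ∑ s,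
          (Real.log (BR E A β (μ τ) i s) - Real.log (μ τ i s)) *
            (BR E A β (μ τ) i s - μ τ i s)) = 0 ↔
        ∀ i, BR E A β (μ τ) i = μ τ i)) ∧
    AntitoneOn
      (fun t => ∑ i, ω i *
        (pPay E A β (μ t) i (BR E A β (μ t) i) - pPay E A β (μ t) i (μ t i)))
      (Set.Ici (0 : ℝ)) :=
  lyapunov_derivative_nonpos_of_weightedZeroSum_general E A ω hω hzs β hβ μ hμΔ hode
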